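/- Let $k < n$ be integers, $B_k = B(0,2^{-k}) \subset \mathbb{R}^d$, and for $h \in L_1(\mathbb{R}^d)$ define $M_{k,n}h(x) = \frac{1}{|B_k|}\int_{\mathcal{I}(B_k+x,n)} h(y)\,dy$, where $\mathcal{I}(B_k+x,n)$ is the union of the sets $Q \cap (B_k+x)$ over dyadic cubes $Q$ of side length $2^{-n}$ meeting $\partial(B_k+x)$. Then for all $1 \le p \le \infty$ and $h \in L_p(\mathbb{R}^d)$, $\|M_{k,n} h\|_p \le C_d \, 2^{k-n} \|h\|_p$ with $C_d$ depending only on $d$. -/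

import Mathlib

open MeasureTheory Metric
open scoped ENNReal

noncomputable section

/-- Euclidean space `ℝ^d`. -/
abbrev Euc (d : ℕ) := EuclideanSpace ℝ (Fin d)

/-- The standard dyadic cube at scale `n` (side length `2^{-n}`) indexed by `m`. -/
def dyadicCube (d : ℕ) (n : ℤ) (m : Fin d → ℤ) : Set (Euc d) :=
  {y | ∀ j, (m j : ℝ) * 2 ^ (-n) ≤ y j ∧ y j < ((m j : ℝ) + 1) * 2 ^ (-n)}

/-- Index of the dyadic cube at scale `n` containing `x`. -/
def dyadicIdx (d : ℕ) (n : ℤ) (x : Euc d) : Fin d → ℤ :=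
  fun j => ⌊(2 : ℝ) ^ n * x j⌋

/-- Dyadic conditional expectation at scale `2^{-n}`. -/
def Ek (d : ℕ) (n : ℤ) (h : Euc d → ℝ) (x : Euc d) : ℝ :=
  (2 : ℝ) ^ (n * d) * ∫ y in dyadicCube d n (dyadicIdx d n x), h y

/-- Average over the Euclidean ball of radius `2^{-k}` centered at `x`. -/
def Mk (d : ℕ) (k : ℤ) (h : Euc d → ℝ) (x : Euc d) : ℝ :=
  ((volume (ball (0 : Euc d) ((2 : ℝ) ^ (-k)))).toReal)⁻¹ *
    ∫ y in ball x ((2 : ℝ) ^ (-k)), h y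

/-- Indices of dyadic cubes at scale `n` meeting the boundary of the ball `B(x, 2^{-k})`. -/
def bdryIdx (d : ℕ) (k n : ℤ) (x : Euc d) : Set (Fin d → ℤ) :=
  {m | (dyadicCube d n m ∩ frontier (ball x ((2 : ℝ) ^ (-k)))).Nonempty}

/-- `𝓘(B_k + x, n)`: union over boundary cubes `Q` at scale `n` of `Q ∩ B(x,2^{-k})`. -/
def Ikn (d : ℕ) (k n : ℤ) (x : Euc d) : Set (Euc d) :=
  ⋃ m ∈ bdryIdx d k n x, dyadicCube d n m ∩ ball x ((2 : ℝ) ^ (-k))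

/-- The operator `M_{k,n}`. -/
def Mkn (d : ℕ) (k n : ℤ) (h : Euc d → ℝ) (x : Euc d) : ℝ :=
  ((volume (ball (0 : Euc d) ((2 : ℝ) ^ (-k)))).toReal)⁻¹ * ∫ y in Ikn d k n x, h y

/-- The concentric dilation `iQ` of the dyadic cube at scale `n` indexed by `m`. -/
def cubeDil (d : ℕ) (i : ℕ) (n : ℤ) (m : Fin d → ℤ) : Set (Euc d) :=
  {y | ∀ j, ((m j : ℝ) + 1 / 2) * 2 ^ (-n) - (i : ℝ) * 2 ^ (-n) / 2 ≤ y j ∧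
      y j < ((m j : ℝ) + 1 / 2) * 2 ^ (-n) + (i : ℝ) * 2 ^ (-n) / 2}

/-
Every point of `𝓘(B_k + x, n)` lies in a dyadic cube of diameter `√d 2^{-n}` that meets the sphere
`∂(B_k + x)`, so `𝓘(B_k + x, n)` lies in the shell `B(x, r) \ B(x, r - δ)` with `r = 2^{-k}` and
`δ = √d 2^{-n}`. This shell has measure at most `d (δ / r) |B_k|`, hence
`|M_{k,n} h| ≤ |B_k|⁻¹ ∫_{shell(x)} |h|`. The kernel `1[y ∈ shell(x)]` has all its `x`- and
`y`-sections of measure at most `d (δ / r) |B_k|`, so by Schur's test (Hölder on each section,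
then Tonelli) the operator it defines has norm at most `d (δ / r) |B_k|` on every `L_p`,
`1 ≤ p ≤ ∞`.
-/

open Set

section SchurTest

variable {α : Type*} [MeasurableSpace α]

theorem lintegral_rpow_le_measure_univ_rpow_mul (ν : Measure α) {g : α → ℝ≥0∞}
    (hg : AEMeasurable g ν) {q : ℝ} (hq : 1 ≤ q) :
    (∫⁻ a, g a ∂ν) ^ q ≤ ν univ ^ (q - 1) * ∫⁻ a, g a ^ q ∂ν := by
  rcases hq.eq_or_lt with rfl | hq
  · simp
  have hpq : q.HolderConjugate (q / (q - 1)) := .conjExponent hq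
  have holder := ENNReal.lintegral_mul_le_Lp_mul_Lq ν hpq hg (aemeasurable_const (b := 1))
  simp only [Pi.mul_apply, mul_one, ENNReal.one_rpow, lintegral_one] at holder
  calc (∫⁻ a, g a ∂ν) ^ q
      ≤ ((∫⁻ a, g a ^ q ∂ν) ^ (1 / q) * ν univ ^ (1 / (q / (q - 1)))) ^ q := by gcongr
    _ = ν univ ^ (q - 1) * ∫⁻ a, g a ^ q ∂ν := by
      rw [ENNReal.mul_rpow_of_nonneg _ _ (by linarith), ← ENNReal.rpow_mul, ← ENNReal.rpow_mul,
        one_div_mul_cancel (by linarith), ENNReal.rpow_one, mul_comm]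
      congr 2
      field_simp

variable {μ : Measure α} {S : Set (α × α)} {A : ℝ≥0∞}

theorem lintegral_section_eq_lintegral_indicator (hS : MeasurableSet S) (g : α → ℝ≥0∞) (x : α) :
    ∫⁻ y in Prod.mk x ⁻¹' S, g y ∂μ = ∫⁻ y, S.indicator (fun z => g z.2) (x, y) ∂μ := by
  rw [← lintegral_indicator (measurable_prodMk_left hS)]
  rfl

theorem measurable_lintegral_section [SFinite μ] (hS : MeasurableSet S) {g : α → ℝ≥0∞}
    (hg : Measurable g) :
    Measurable fun x => ∫⁻ y in Prod.mk x ⁻¹' S, g y ∂μ := by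
  simp_rw [lintegral_section_eq_lintegral_indicator hS]
  exact ((hg.comp measurable_snd).indicator hS).lintegral_prod_right'

theorem lintegral_lintegral_section_le [SFinite μ] (hS : MeasurableSet S)
    (hA : ∀ y, μ ((·, y) ⁻¹' S) ≤ A) {g : α → ℝ≥0∞} (hg : Measurable g) :
    ∫⁻ x, ∫⁻ y in Prod.mk x ⁻¹' S, g y ∂μ ∂μ ≤ A * ∫⁻ y, g y ∂μ := by
  have hG : Measurable (S.indicator fun z : α × α => g z.2) :=
    (hg.comp measurable_snd).indicator hS
  calc ∫⁻ x, ∫⁻ y in Prod.mk x ⁻¹' S, g y ∂μ ∂μ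
      = ∫⁻ y, ∫⁻ x, S.indicator (fun z => g z.2) (x, y) ∂μ ∂μ := by
        simp_rw [lintegral_section_eq_lintegral_indicator hS]
        exact lintegral_lintegral_swap hG.aemeasurable
    _ = ∫⁻ y, g y * μ ((·, y) ⁻¹' S) ∂μ := by
        refine lintegral_congr fun y => ?_
        rw [← lintegral_indicator_const (measurable_prodMk_right hS)]
        rfl
    _ ≤ ∫⁻ y, A * g y ∂μ := lintegral_mono fun y => by rw [mul_comm]; gcongr; exact hA y
    _ = A * ∫⁻ y, g y ∂μ := lintegral_const_mul A hg

theorem eLpNorm_top_lintegral_section_le (hA : ∀ x, μ (Prod.mk x ⁻¹' S) ≤ A) (g : α → ℝ≥0∞) :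
    eLpNorm (fun x => ∫⁻ y in Prod.mk x ⁻¹' S, g y ∂μ) ∞ μ ≤ A * eLpNorm g ∞ μ := by
  simp only [eLpNorm_exponent_top, eLpNormEssSup, enorm_eq_self]
  refine essSup_le_of_ae_le _ (.of_forall fun x => ?_)
  calc ∫⁻ y in Prod.mk x ⁻¹' S, g y ∂μ
      ≤ ∫⁻ _ in Prod.mk x ⁻¹' S, essSup g μ ∂μ :=
        lintegral_mono_ae (ae_restrict_of_ae (ENNReal.ae_le_essSup g))
    _ ≤ A * essSup g μ := by rw [setLIntegral_const, mul_comm]; gcongr; exact hA x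

theorem eLpNorm_lintegral_section_le_of_ne_top [SFinite μ] (hS : MeasurableSet S)
    (hA₁ : ∀ x, μ (Prod.mk x ⁻¹' S) ≤ A) (hA₂ : ∀ y, μ ((·, y) ⁻¹' S) ≤ A)
    {g : α → ℝ≥0∞} (hg : Measurable g) {p : ℝ≥0∞} (hp : 1 ≤ p) (hp_top : p ≠ ∞) :
    eLpNorm (fun x => ∫⁻ y in Prod.mk x ⁻¹' S, g y ∂μ) p μ ≤ A * eLpNorm g p μ := by
  have hp₀ : p ≠ 0 := (zero_lt_one.trans_le hp).ne'
  have hq : 1 ≤ p.toReal := by simpa using ENNReal.toReal_mono hp_top hp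
  set q := p.toReal
  have pointwise (x : α) : (∫⁻ y in Prod.mk x ⁻¹' S, g y ∂μ) ^ q ≤
      A ^ (q - 1) * ∫⁻ y in Prod.mk x ⁻¹' S, g y ^ q ∂μ := by
    refine (lintegral_rpow_le_measure_univ_rpow_mul _ hg.aemeasurable hq).trans ?_
    rw [Measure.restrict_apply_univ]
    gcongr
    exact hA₁ x
  have integrated : ∫⁻ x, (∫⁻ y in Prod.mk x ⁻¹' S, g y ∂μ) ^ q ∂μ ≤ A ^ q * ∫⁻ y, g y ^ q ∂μ :=
    calc ∫⁻ x, (∫⁻ y in Prod.mk x ⁻¹' S, g y ∂μ) ^ q ∂μ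
        ≤ ∫⁻ x, A ^ (q - 1) * ∫⁻ y in Prod.mk x ⁻¹' S, g y ^ q ∂μ ∂μ := lintegral_mono pointwise
      _ = A ^ (q - 1) * ∫⁻ x, ∫⁻ y in Prod.mk x ⁻¹' S, g y ^ q ∂μ ∂μ :=
          lintegral_const_mul _ (measurable_lintegral_section hS (hg.pow_const q))
      _ ≤ A ^ (q - 1) * (A * ∫⁻ y, g y ^ q ∂μ) := by
          gcongr; exact lintegral_lintegral_section_le hS hA₂ (hg.pow_const q)
      _ = A ^ q * ∫⁻ y, g y ^ q ∂μ := by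
          rw [← mul_assoc]
          nth_rw 2 [← ENNReal.rpow_one A]
          rw [← ENNReal.rpow_add_of_nonneg _ _ (by linarith) zero_le_one, sub_add_cancel]
  simp only [eLpNorm_eq_lintegral_rpow_enorm_toReal hp₀ hp_top, enorm_eq_self]
  calc (∫⁻ x, (∫⁻ y in Prod.mk x ⁻¹' S, g y ∂μ) ^ q ∂μ) ^ (1 / q)
      ≤ (A ^ q * ∫⁻ y, g y ^ q ∂μ) ^ (1 / q) := by gcongr
    _ = A * (∫⁻ y, g y ^ q ∂μ) ^ (1 / q) := by
        rw [ENNReal.mul_rpow_of_nonneg _ _ (by positivity), ← ENNReal.rpow_mul,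
          mul_one_div_cancel (by linarith), ENNReal.rpow_one]

theorem eLpNorm_lintegral_section_le [SFinite μ] (hS : MeasurableSet S)
    (hA₁ : ∀ x, μ (Prod.mk x ⁻¹' S) ≤ A) (hA₂ : ∀ y, μ ((·, y) ⁻¹' S) ≤ A)
    {g : α → ℝ≥0∞} (hg : AEMeasurable g μ) {p : ℝ≥0∞} (hp : 1 ≤ p) :
    eLpNorm (fun x => ∫⁻ y in Prod.mk x ⁻¹' S, g y ∂μ) p μ ≤ A * eLpNorm g p μ := by
  have hT : (fun x => ∫⁻ y in Prod.mk x ⁻¹' S, g y ∂μ) =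
      fun x => ∫⁻ y in Prod.mk x ⁻¹' S, hg.mk g y ∂μ :=
    funext fun x => lintegral_congr_ae (ae_restrict_of_ae hg.ae_eq_mk)
  rw [hT, eLpNorm_congr_ae hg.ae_eq_mk]
  rcases eq_or_ne p ∞ with rfl | hp_top
  · exact eLpNorm_top_lintegral_section_le hA₁ _
  · exact eLpNorm_lintegral_section_le_of_ne_top hS hA₁ hA₂ hg.measurable_mk hp hp_top

end SchurTest

section Shell

variable {E : Type*} [NormedAddCommGroup E] [NormedSpace ℝ E] [Nontrivial E]
  [FiniteDimensional ℝ E] [MeasurableSpace E] [BorelSpace E]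
  (μ : Measure E) [μ.IsAddHaarMeasure] {r δ : ℝ}

theorem MeasureTheory.Measure.addHaar_ball_diff_ball_le (c : E) (hr : 0 < r) (hδ : 0 ≤ δ) :
    μ (ball c r \ ball c (r - δ)) ≤ ENNReal.ofReal (Module.finrank ℝ E * δ / r) * μ (ball c r) := by
  set d := Module.finrank ℝ E
  rcases le_or_gt δ r with hδr | hrδ
  · have hpow : r ^ d - (r - δ) ^ d ≤ d * δ / r * r ^ d := by
      have bernoulli := pow_add_mul_le_add_pow hr.le (by linarith : 0 ≤ 2 * r + -δ) d
      rw [← sub_eq_add_neg] at bernoulli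
      have hrd : r ^ (d - 1) * r = r ^ d := pow_sub_one_mul Module.finrank_pos.ne' r
      have hr_pow : d * δ / r * r ^ d = d * r ^ (d - 1) * δ := by
        rw [← hrd]
        field_simp
      linarith
    calc μ (ball c r \ ball c (r - δ)) = μ (ball c r) - μ (ball c (r - δ)) :=
          measure_sdiff (ball_subset_ball (by linarith)) measurableSet_ball.nullMeasurableSet
            measure_ball_lt_top.ne
      _ = ENNReal.ofReal (r ^ d - (r - δ) ^ d) * μ (ball 0 1) := by
          rw [Measure.addHaar_ball μ c hr.le, Measure.addHaar_ball μ c (by linarith : 0 ≤ r - δ),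
            ← ENNReal.sub_mul fun _ _ => measure_ball_lt_top.ne,
            ← ENNReal.ofReal_sub _ (by positivity)]
      _ ≤ ENNReal.ofReal (d * δ / r * r ^ d) * μ (ball 0 1) := by gcongr
      _ = ENNReal.ofReal (d * δ / r) * μ (ball c r) := by
          rw [ENNReal.ofReal_mul (by positivity), mul_assoc, Measure.addHaar_ball μ c hr.le]
  · have hd : (1 : ℝ) ≤ d := by exact_mod_cast Module.finrank_pos
    rw [ball_eq_empty.2 (by linarith : r - δ ≤ 0), sdiff_empty]
    refine le_mul_of_one_le_left' ?_
    rw [← ENNReal.ofReal_one]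
    gcongr
    rw [le_div_iff₀ hr]
    nlinarith

theorem eLpNorm_lintegral_ball_diff_ball_le (hr : 0 < r) (hδ : 0 ≤ δ) {g : E → ℝ≥0∞}
    (hg : AEMeasurable g μ) {p : ℝ≥0∞} (hp : 1 ≤ p) :
    eLpNorm (fun x => ∫⁻ y in ball x r \ ball x (r - δ), g y ∂μ) p μ ≤
      ENNReal.ofReal (Module.finrank ℝ E * δ / r) * μ (ball 0 r) * eLpNorm g p μ := by
  set S : Set (E × E) := {z | z.2 ∈ ball z.1 r \ ball z.1 (r - δ)}
  have hS : MeasurableSet S := by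
    simp only [S, Set.mem_sdiff, mem_ball]
    measurability
  have hshell (c : E) : μ (ball c r \ ball c (r - δ)) ≤
      ENNReal.ofReal (Module.finrank ℝ E * δ / r) * μ (ball 0 r) := by
    rw [← Measure.addHaar_ball_center μ c]
    exact Measure.addHaar_ball_diff_ball_le μ c hr hδ
  have hsection (y : E) : (·, y) ⁻¹' S = ball y r \ ball y (r - δ) := by
    ext x; simp [S, dist_comm]
  exact eLpNorm_lintegral_section_le hS hshell (fun y => hsection y ▸ hshell y) hg hp

end Shell

theorem dist_le_of_mem_dyadicCube {d : ℕ} {n : ℤ} {m : Fin d → ℤ} {y z : Euc d}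
    (hy : y ∈ dyadicCube d n m) (hz : z ∈ dyadicCube d n m) :
    dist y z ≤ √d * 2 ^ (-n) := by
  have hcoord (j : Fin d) : dist (y j) (z j) ≤ 2 ^ (-n) := by
    obtain ⟨hy₁, hy₂⟩ := hy j
    obtain ⟨hz₁, hz₂⟩ := hz j
    rw [Real.dist_eq, abs_sub_le_iff]
    constructor <;> linarith
  calc dist y z = √(∑ j, dist (y j) (z j) ^ 2) := EuclideanSpace.dist_eq y z
    _ ≤ √(∑ _j : Fin d, ((2 : ℝ) ^ (-n)) ^ 2) := by
        gcongr with j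
        exact hcoord j
    _ = √d * 2 ^ (-n) := by
        rw [Finset.sum_const, Finset.card_univ, Fintype.card_fin, nsmul_eq_mul,
          Real.sqrt_mul (Nat.cast_nonneg d), Real.sqrt_sq (by positivity)]

theorem Ikn_subset_ball_diff_ball (d : ℕ) (k n : ℤ) (x : Euc d) :
    Ikn d k n x ⊆ ball x (2 ^ (-k)) \ ball x (2 ^ (-k) - √d * 2 ^ (-n)) := by
  intro y hy
  simp only [Ikn, Set.mem_iUnion, Set.mem_inter_iff, exists_prop] at hy
  obtain ⟨m, ⟨z, hzQ, hz_frontier⟩, hyQ, hy_ball⟩ := hy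
  have hz : dist z x = 2 ^ (-k) := mem_sphere.1 (frontier_ball_subset_sphere hz_frontier)
  refine ⟨hy_ball, fun hy_inner => ?_⟩
  have := dist_triangle z y x
  linarith [mem_ball.1 hy_inner, dist_le_of_mem_dyadicCube hzQ hyQ]

/-- `‖M_{k,n} h‖_p ≤ C_d 2^{k-n} ‖h‖_p` for all `1 ≤ p ≤ ∞` and `k < n`. -/
theorem Mkn_Lp_bound (d : ℕ) (hd : 0 < d) :
    ∃ C : ℝ, 0 < C ∧ ∀ (k n : ℤ), k < n → ∀ (p : ℝ≥0∞), 1 ≤ p →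
      ∀ h : Euc d → ℝ, MemLp h p volume →
        eLpNorm (Mkn d k n h) p volume ≤
          ENNReal.ofReal (C * 2 ^ (k - n)) * eLpNorm h p volume := by
  have : Nonempty (Fin d) := Fin.pos_iff_nonempty.1 hd
  refine ⟨d * √d, by positivity, fun k n _ p hp h hh => ?_⟩
  set r : ℝ := 2 ^ (-k)
  set δ : ℝ := √d * 2 ^ (-n)
  set v := volume (ball (0 : Euc d) r)
  have hv : ‖v.toReal⁻¹‖ₑ * v = 1 := by
    have hv₀ : v ≠ 0 := (measure_ball_pos _ _ (by positivity)).ne'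
    have hv_top : v ≠ ∞ := measure_ball_lt_top.ne
    rw [Real.enorm_eq_ofReal (by positivity),
      ENNReal.ofReal_inv_of_pos (ENNReal.toReal_pos hv₀ hv_top), ENNReal.ofReal_toReal hv_top,
      ENNReal.inv_mul_cancel hv₀ hv_top]
  have hconst : ((Module.finrank ℝ (Euc d) : ℕ) : ℝ) * δ / r = d * √d * 2 ^ (k - n) := by
    simp only [finrank_euclideanSpace_fin, r, δ, zpow_neg]
    rw [zpow_sub₀ two_ne_zero]
    field_simp
  calc eLpNorm (Mkn d k n h) p volume
      = ‖v.toReal⁻¹‖ₑ * eLpNorm (fun x => ∫ y in Ikn d k n x, h y) p volume :=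
        eLpNorm_const_smul (v.toReal⁻¹) (fun x => ∫ y in Ikn d k n x, h y) p volume
    _ ≤ ‖v.toReal⁻¹‖ₑ * eLpNorm (fun x => ∫⁻ y in ball x r \ ball x (r - δ), ‖h y‖ₑ) p volume := by
        refine mul_le_mul_right (eLpNorm_mono_enorm fun x => ?_) _
        rw [enorm_eq_self]
        exact (enorm_integral_le_lintegral_enorm _).trans
          (lintegral_mono_set (Ikn_subset_ball_diff_ball d k n x))
    _ ≤ ‖v.toReal⁻¹‖ₑ * (ENNReal.ofReal (d * √d * 2 ^ (k - n)) * v * eLpNorm h p volume) := by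
        rw [← hconst, ← eLpNorm_enorm h]
        gcongr
        exact eLpNorm_lintegral_ball_diff_ball_le volume (by positivity) (by positivity)
          hh.aestronglyMeasurable.enorm hp
    _ = ENNReal.ofReal (d * √d * 2 ^ (k - n)) * eLpNorm h p volume := by
        rw [mul_comm _ v, mul_assoc, ← mul_assoc _ v, hv, one_mul]
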